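/- Let c₁, c₂, n₁, n₂ be positive integers and for each i ∈ {1,…,c₁} and j ∈ {1,…,c₂} let G_{i,j} and H_{i,j} be real n₁×n₂ matrices. Let G̃ and H̃ be the (c₁·c₂)×(n₁·n₂) matrices whose rows, listed in the order (1,1),(1,2),…,(1,c₂),(2,1),…,(c₁,c₂) (the second index varying fastest), are vec(G_{i,j})ᵀ and vec(H_{i,j})ᵀ respectively. Then vec( ∑_{i=1}^{c₁} ∑_{j=1}^{c₂} G_{i,j} ⊗ H_{i,j} ) = ( I_{n₂} ⊗ K_{n₁,n₂} ⊗ I_{n₁} ) · vec( H̃ᵀ · G̃ ), where ⊗ denotes the Kronecker product. -/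

import Mathlib

/-!
Entrywise, `vec (G ⊗ H)` at `((b₁, b₂), (a₁, a₂))` is `G a₁ b₁ * H a₂ b₂`, which is the entry of
the rank-one matrix `vec H · (vec G)ᵀ` at `((b₂, a₂), (b₁, a₁))`. Since the rows of `G̃` and `H̃`
are the vectors `vec G_{i,j}` and `vec H_{i,j}`, the sum over `(i, j)` of these rank-one matrices
is `H̃ᵀ G̃`. Finally `I ⊗ K ⊗ I` acts on the vectorization of a matrix with doubly-indexed rows
and columns by swapping the two middle indices, which is exactly the reordering needed.
-/

open Matrix

def vec {α β R : Type*} (A : Matrix α β R) : β × α → R := fun p => A p.2 p.1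

/-- The commutation matrix `K_{m,n}`: the unique `mn × mn` matrix satisfying
`vec A = K_{m,n} · vec Aᵀ` for every `m × n` matrix `A` (column-major `vec`).  Its rows are
indexed like `vec` of an `m × n` matrix and its columns like `vec` of an `n × m` matrix. -/
def commMatR (m n : ℕ) : Matrix (Fin n × Fin m) (Fin m × Fin n) ℝ := fun a b =>
  if b.1 = a.2 ∧ b.2 = a.1 then 1 else 0

theorem vec_eq_matrixVec {α β R : Type*} (A : Matrix α β R) : _root_.vec A = Matrix.vec A := rfl

open scoped Kronecker

namespace Matrix

variable {ι l m n p R : Type*}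

theorem transpose_mul_eq_sum_vecMulVec [NonUnitalNonAssocSemiring R] [Fintype ι]
    (A : Matrix ι m R) (B : Matrix ι n R) : Aᵀ * B = ∑ r, vecMulVec (A r) (B r) := by
  ext u v
  simp only [mul_apply, transpose_apply, sum_apply, vecMulVec_apply]

theorem vec_kronecker_apply [CommMagma R] (A : Matrix l m R) (B : Matrix n p R)
    (j₁ : m) (j₂ : p) (i₁ : l) (i₂ : n) :
    vec (A ⊗ₖ B) ((j₁, j₂), (i₁, i₂)) = vec (vecMulVec (vec B) (vec A)) ((j₁, i₁), (j₂, i₂)) :=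
  mul_comm _ _

theorem one_kronecker_mulVec_apply [Semiring R] [Fintype l] [Fintype m] [DecidableEq l]
    (A : Matrix n m R) (v : l × m → R) (i : l) (x : n) :
    ((1 ⊗ₖ A) *ᵥ v) (i, x) = (A *ᵥ fun y => v (i, y)) x := by
  rw [show v = vec (of fun y i => v (i, y)) from rfl, ← vec_mul_eq_mulVec]
  rfl

theorem kronecker_one_mulVec_apply [CommSemiring R] [Fintype m] [Fintype l] [DecidableEq l]
    (A : Matrix n m R) (v : m × l → R) (x : n) (j : l) :
    ((A ⊗ₖ 1) *ᵥ v) (x, j) = (A *ᵥ fun y => v (y, j)) x := by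
  rw [show v = vec (of fun j y => v (y, j)) from rfl, kronecker_mulVec_vec, Matrix.one_mul]
  simp only [vec, mul_apply, mulVec, dotProduct, of_apply, transpose_apply, mul_comm]

end Matrix

theorem commMatR_mulVec (m n : ℕ) (v : Fin m × Fin n → ℝ) :
    commMatR m n *ᵥ v = v ∘ Prod.swap := by
  ext ⟨j, i⟩
  simp [commMatR, mulVec, dotProduct, ite_and, Fintype.sum_prod_type]

theorem one_kronecker_commMatR_kronecker_one_mulVec_apply {k l : ℕ} (m n : ℕ)
    (v : Fin k × ((Fin m × Fin n) × Fin l) → ℝ) (c : Fin k) (j : Fin n) (i : Fin m) (d : Fin l) :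
    ((1 ⊗ₖ (commMatR m n ⊗ₖ 1)) *ᵥ v) (c, ((j, i), d)) = v (c, ((i, j), d)) := by
  rw [Matrix.one_kronecker_mulVec_apply, Matrix.kronecker_one_mulVec_apply, commMatR_mulVec]
  rfl

theorem stmt15 (c₁ c₂ n₁ n₂ : ℕ)
    (G H : Fin c₁ → Fin c₂ → Matrix (Fin n₁) (Fin n₂) ℝ)
    (Gt Ht : Matrix (Fin c₁ × Fin c₂) (Fin n₂ × Fin n₁) ℝ)
    (hGt : ∀ (i : Fin c₁) (j : Fin c₂) (v : Fin n₂ × Fin n₁), Gt (i, j) v = _root_.vec (G i j) v)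
    (hHt : ∀ (i : Fin c₁) (j : Fin c₂) (v : Fin n₂ × Fin n₁), Ht (i, j) v = _root_.vec (H i j) v)
    -- `P = I_{n₂} ⊗ K_{n₁,n₂} ⊗ I_{n₁}`
    (P : Matrix (Fin n₂ × ((Fin n₂ × Fin n₁) × Fin n₁))
      (Fin n₂ × ((Fin n₁ × Fin n₂) × Fin n₁)) ℝ)
    (hP : P = kroneckerMap (· * ·) (1 : Matrix (Fin n₂) (Fin n₂) ℝ)
      (kroneckerMap (· * ·) (commMatR n₁ n₂) (1 : Matrix (Fin n₁) (Fin n₁) ℝ))) :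
    ∀ (b₁ b₂ : Fin n₂) (a₁ a₂ : Fin n₁),
      _root_.vec (∑ i, ∑ j, kroneckerMap (· * ·) (G i j) (H i j)) ((b₁, b₂), (a₁, a₂)) =
        P.mulVec
          (fun c => _root_.vec (Htᵀ * Gt) ((c.1, c.2.1.1), (c.2.1.2, c.2.2)))
          (b₁, ((b₂, a₁), a₂)) := by
  intro b₁ b₂ a₁ a₂
  have hGH : Htᵀ * Gt = ∑ i, ∑ j, vecMulVec (Matrix.vec (H i j)) (Matrix.vec (G i j)) := by
    rw [transpose_mul_eq_sum_vecMulVec, Fintype.sum_prod_type]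
    simp only [fun i j => funext (hGt i j), fun i j => funext (hHt i j), vec_eq_matrixVec]
  rw [hP, one_kronecker_commMatR_kronecker_one_mulVec_apply, vec_eq_matrixVec, vec_eq_matrixVec,
    hGH]
  simp only [vec_sum, Finset.sum_apply, vec_kronecker_apply]
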